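/- (Remark 5.1) Let Z ⊆ ℤ² be finite and nonempty, and let D = ⋃_{z ∈ Z} Q_z, where Q_z = z + [−1/2, 1/2]² is the closed unit square centered at z. Let x ∈ D satisfy |x| ≥ |y| for all y ∈ D. Then there is exactly one z ∈ Z with x ∈ Q_z, and for this z the point x is a vertex of Q_z, i.e. x − z ∈ {−1/2, 1/2}². -/

import Mathlib

/-- The closed axis-aligned unit square Q_z = z + [−1/2, 1/2]² centered at z ∈ ℤ². -/
def Qsq (z : Fin 2 → ℤ) : Set (EuclideanSpace ℝ (Fin 2)) :=
  {p | ∀ i, |p i - (z i : ℝ)| ≤ 1 / 2}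

/-! A point of maximal norm cannot have a coordinate that could be pushed further from the
origin inside its square: it would still lie in `D` and have larger norm. In each coordinate
`x i` is therefore a point of maximal absolute value of `[z i - 1/2, z i + 1/2]`, i.e. an
endpoint, and two different squares would offer both `x i - 1` and `x i + 1`, one of which is
larger in absolute value. -/

theorem EuclideanSpace.norm_lt_norm_of_abs_le_of_abs_lt {ι : Type*} [Fintype ι]
    {x y : EuclideanSpace ℝ ι} (hle : ∀ j, |x j| ≤ |y j|) {i : ι} (hlt : |x i| < |y i|) :
    ‖x‖ < ‖y‖ := by
  rw [EuclideanSpace.norm_eq, EuclideanSpace.norm_eq]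
  refine Real.sqrt_lt_sqrt (by positivity) <|
    Finset.sum_lt_sum (fun j _ => ?_) ⟨i, Finset.mem_univ i, ?_⟩
  · exact pow_le_pow_left₀ (abs_nonneg _) (hle j) 2
  · exact pow_lt_pow_left₀ hlt (abs_nonneg _) two_ne_zero

theorem abs_apply_le_of_update_mem {ι : Type*} [Fintype ι] [DecidableEq ι]
    {S : Set (EuclideanSpace ℝ ι)} {x : EuclideanSpace ℝ ι} (hmax : ∀ y ∈ S, ‖y‖ ≤ ‖x‖)
    {i : ι} {t : ℝ} (ht : WithLp.toLp 2 (Function.update x.ofLp i t) ∈ S) : |t| ≤ |x i| := by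
  by_contra! hlt
  refine (hmax _ ht).not_gt <| EuclideanSpace.norm_lt_norm_of_abs_le_of_abs_lt (fun j => ?_)
    (i := i) (by simpa using hlt)
  rcases eq_or_ne j i with rfl | hj
  · simpa using hlt.le
  · simp [Function.update_of_ne hj]

theorem update_mem_Qsq {z : Fin 2 → ℤ} {x : EuclideanSpace ℝ (Fin 2)} (hx : x ∈ Qsq z)
    {i : Fin 2} {t : ℝ} (ht : |t - (z i : ℝ)| ≤ 1 / 2) :
    WithLp.toLp 2 (Function.update x.ofLp i t) ∈ Qsq z := by
  intro j
  rcases eq_or_ne j i with rfl | hj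
  · simpa using ht
  · simpa [Function.update_of_ne hj] using hx j

theorem sub_eq_half_or_sub_eq_neg_half {a c : ℝ} (ha : |a - c| ≤ 1 / 2)
    (hc : ∀ t, |t - c| ≤ 1 / 2 → |t| ≤ |a|) : a - c = 1 / 2 ∨ a - c = -(1 / 2) := by
  have hfar : |c| + 1 / 2 ≤ |a| := by
    have hup := hc (c + 1 / 2) (by norm_num [abs_of_pos])
    have hdown := hc (c - 1 / 2) (by norm_num [abs_of_neg])
    rcases le_total 0 c with h | h
    · rw [abs_of_nonneg h]
      rw [abs_of_pos (by linarith : 0 < c + 1 / 2)] at hup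
      linarith
    · rw [abs_of_nonpos h]
      rw [abs_of_neg (by linarith : c - 1 / 2 < 0)] at hdown
      linarith
  have hedge : |a - c| = 1 / 2 := le_antisymm ha (by linarith [abs_sub_abs_le_abs_sub a c])
  exact (abs_eq (by norm_num)).mp hedge

theorem eq_of_forall_abs_le_of_abs_sub_le_half {a c c' : ℝ} (ha : |a - c| ≤ 1 / 2) (ha' : |a - c'| ≤ 1 / 2)
    (hc : ∀ t, |t - c| ≤ 1 / 2 → |t| ≤ |a|) (hc' : ∀ t, |t - c'| ≤ 1 / 2 → |t| ≤ |a|) :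
    c = c' := by
  have hout : ¬(|a - 1| ≤ |a| ∧ |a + 1| ≤ |a|) := fun ⟨h₁, h₂⟩ => by
    nlinarith [sq_le_sq.mpr h₁, sq_le_sq.mpr h₂]
  rcases sub_eq_half_or_sub_eq_neg_half ha hc with h | h <;>
    rcases sub_eq_half_or_sub_eq_neg_half ha' hc' with h' | h'
  · linarith
  · exact (hout ⟨hc (a - 1) (abs_le.mpr ⟨by linarith, by linarith⟩),
      hc' (a + 1) (abs_le.mpr ⟨by linarith, by linarith⟩)⟩).elim
  · exact (hout ⟨hc' (a - 1) (abs_le.mpr ⟨by linarith, by linarith⟩),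
      hc (a + 1) (abs_le.mpr ⟨by linarith, by linarith⟩)⟩).elim
  · linarith

theorem stmt16_general (Z : Finset (Fin 2 → ℤ))
    (x : EuclideanSpace ℝ (Fin 2)) (hx : x ∈ ⋃ z ∈ Z, Qsq z)
    (hmax : ∀ y ∈ ⋃ z ∈ Z, Qsq z, ‖y‖ ≤ ‖x‖) :
    (∃! z : Fin 2 → ℤ, z ∈ Z ∧ x ∈ Qsq z) ∧
    ∀ z ∈ Z, x ∈ Qsq z → ∀ i, x i - (z i : ℝ) = 1 / 2 ∨ x i - (z i : ℝ) = -(1 / 2) := by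
  have hcoord : ∀ z ∈ Z, x ∈ Qsq z → ∀ i t, |t - (z i : ℝ)| ≤ 1 / 2 → |t| ≤ |x i| :=
    fun z hz hxz i t ht =>
      abs_apply_le_of_update_mem hmax (Set.mem_biUnion hz (update_mem_Qsq hxz ht))
  obtain ⟨z₀, hz₀, hxz₀⟩ := Set.mem_iUnion₂.mp hx
  refine ⟨⟨z₀, ⟨hz₀, hxz₀⟩, fun z ⟨hz, hxz⟩ => funext fun i => ?_⟩,
    fun z hz hxz i => sub_eq_half_or_sub_eq_neg_half (hxz i) (hcoord z hz hxz i)⟩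
  exact_mod_cast eq_of_forall_abs_le_of_abs_sub_le_half (hxz i) (hxz₀ i) (hcoord z hz hxz i) (hcoord z₀ hz₀ hxz₀ i)

/-- Remark 5.1: a point x of maximal norm of a finite union
D = ⋃_{z ∈ Z} Q_z of closed unit squares centered at lattice points lies in exactly one
square Q_z, and is one of its vertices. -/
theorem stmt16 (Z : Finset (Fin 2 → ℤ)) (hZ : Z.Nonempty)
    (x : EuclideanSpace ℝ (Fin 2)) (hx : x ∈ ⋃ z ∈ Z, Qsq z)
    (hmax : ∀ y ∈ ⋃ z ∈ Z, Qsq z, ‖y‖ ≤ ‖x‖) :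
    (∃! z : Fin 2 → ℤ, z ∈ Z ∧ x ∈ Qsq z) ∧
    ∀ z ∈ Z, x ∈ Qsq z → ∀ i, x i - (z i : ℝ) = 1 / 2 ∨ x i - (z i : ℝ) = -(1 / 2) :=
  stmt16_general Z x hx hmax
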